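/- arXiv:2106.03645 — 3 statements merged into one kernel-verified Lean document; each statement's English description precedes it below -/
import Mathlib

section
/- Let α > 1, ε > 0 and δ ∈ (0,1). If P and Q are probability measures on a measurable space with Rényi divergence D_α(P‖Q) ≤ ε, then for every measurable set O one has P(O) ≤ exp(ε + log(1/δ)/(α−1)) · Q(O) + δ. Consequently, an (α, ε)-RDP mechanism is (ε + log(1/δ)/(α−1), δ)-differentially private for all δ ∈ (0,1). -/
open MeasureTheory Real

open Classical in
/-- Rényi divergence of order `a` between measures `P` and `Q`:
`(a-1)⁻¹ log ∫ (dP/dQ)^a dQ`, equal to `⊤` when `P` is not absolutely continuous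
with respect to `Q` (or the integral is infinite). -/
noncomputable def renyiDiv {X : Type*} [MeasurableSpace X] (a : ℝ) (P Q : Measure X) : EReal :=
  if P ≪ Q ∧ ∫⁻ x, (P.rnDeriv Q x) ^ a ∂Q ≠ ⊤ then
    (((a - 1)⁻¹ * Real.log ((∫⁻ x, (P.rnDeriv Q x) ^ a ∂Q).toReal) : ℝ) : EReal)
  else ⊤

/-- Conversion from RDP to DP: if `D_α(P‖Q) ≤ ε`, then for every measurable set `O`,
`P(O) ≤ exp(ε + log(1/δ)/(α-1)) · Q(O) + δ`. -/
theorem dp_of_renyiDiv_le {X : Type*} [MeasurableSpace X] (α ε δ : ℝ) (hα : 1 < α)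
    (hε : 0 < ε) (hδ : δ ∈ Set.Ioo (0 : ℝ) 1) (P Q : Measure X)
    [IsProbabilityMeasure P] [IsProbabilityMeasure Q]
    (h : renyiDiv α P Q ≤ (ε : EReal)) :
    ∀ O : Set X, MeasurableSet O →
      P O ≤ ENNReal.ofReal (Real.exp (ε + Real.log (1 / δ) / (α - 1))) * Q O +
        ENNReal.ofReal δ := by
  intro O hO
  rw [renyiDiv] at h
  by_cases hc : P ≪ Q ∧ ∫⁻ x, (P.rnDeriv Q x) ^ α ∂Q ≠ ⊤
  swap
  · rw [if_neg hc] at h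
    exact absurd h (by simp)
  rw [if_pos hc] at h
  obtain ⟨hPQ, hI⟩ := hc
  set f := P.rnDeriv Q with hf
  have hmf : Measurable f := Measure.measurable_rnDeriv P Q
  have hα1 : (0:ℝ) < α - 1 := by linarith
  have hre : (α-1)⁻¹ * Real.log ((∫⁻ x, f x ^ α ∂Q).toReal) ≤ ε := by exact_mod_cast h
  have hIle : (∫⁻ x, f x ^ α ∂Q) ≤ ENNReal.ofReal (Real.exp ((α-1)*ε)) := by
    rw [← ENNReal.ofReal_toReal hI]
    apply ENNReal.ofReal_le_ofReal
    rcases eq_or_lt_of_le (ENNReal.toReal_nonneg (a := ∫⁻ x, f x ^ α ∂Q)) with h0 | h0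
    · rw [← h0]; positivity
    · rw [← Real.log_le_iff_le_exp h0]
      calc Real.log ((∫⁻ x, f x ^ α ∂Q).toReal)
          = (α-1) * ((α-1)⁻¹ * Real.log ((∫⁻ x, f x ^ α ∂Q).toReal)) := by
            field_simp
        _ ≤ (α-1) * ε := by
            exact mul_le_mul_of_nonneg_left hre (le_of_lt hα1)
  set t := Real.exp (ε + Real.log (1/δ) / (α-1)) with hT
  have ht : 0 < t := Real.exp_pos _
  set T := ENNReal.ofReal t with hTdef
  have hT0 : 0 < T := ENNReal.ofReal_pos.mpr ht
  have hTtop : T ≠ ⊤ := ENNReal.ofReal_ne_top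
  set S := {x | T < f x} with hSdef
  have hS : MeasurableSet S := measurableSet_lt measurable_const hmf
  have hPO : P O = ∫⁻ x in O, f x ∂Q := (Measure.setLIntegral_rnDeriv hPQ O).symm
  have hsub : O ⊆ (O ∩ Sᶜ) ∪ S := by
    intro x hx
    by_cases hxS : x ∈ S
    · exact Or.inr hxS
    · exact Or.inl ⟨hx, hxS⟩
  have hsplit : ∫⁻ x in O, f x ∂Q ≤ ∫⁻ x in O ∩ Sᶜ, f x ∂Q + ∫⁻ x in S, f x ∂Q :=
    le_trans (lintegral_mono_set hsub) (lintegral_union_le _ _ _)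
  -- bound on the complement part
  have h1 : ∫⁻ x in O ∩ Sᶜ, f x ∂Q ≤ T * Q O := by
    calc ∫⁻ x in O ∩ Sᶜ, f x ∂Q ≤ ∫⁻ _ in O ∩ Sᶜ, T ∂Q := by
          refine setLIntegral_mono' (hO.inter hS.compl) fun x hx => ?_
          exact not_lt.mp hx.2
      _ = T * Q (O ∩ Sᶜ) := by rw [setLIntegral_const]
      _ ≤ T * Q O := mul_le_mul_right (measure_mono Set.inter_subset_left) T
  -- bound on the tail part
  have hd0 : T ^ (α-1) ≠ 0 := (ENNReal.rpow_pos hT0 hTtop).ne'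
  have hdt : T ^ (α-1) ≠ ⊤ := ENNReal.rpow_ne_top_of_nonneg (le_of_lt hα1) hTtop
  have h2 : ∫⁻ x in S, f x ∂Q ≤ ENNReal.ofReal δ := by
    have step : ∀ x ∈ S, f x ≤ f x ^ α / T ^ (α-1) := by
      intro x hx
      rw [ENNReal.le_div_iff_mul_le (Or.inl hd0) (Or.inl hdt)]
      calc f x * T ^ (α-1) ≤ f x * f x ^ (α-1) := by
            exact mul_le_mul_right (ENNReal.rpow_le_rpow (le_of_lt hx) (le_of_lt hα1)) _
        _ = f x ^ α := by
            have hexp : (1:ℝ) + (α-1) = α := by ring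
            calc f x * f x ^ (α-1) = f x ^ (1:ℝ) * f x ^ (α-1) := by
                  rw [ENNReal.rpow_one]
              _ = f x ^ ((1:ℝ) + (α-1)) :=
                  (ENNReal.rpow_add_of_nonneg 1 (α-1) zero_le_one (le_of_lt hα1)).symm
              _ = f x ^ α := by rw [hexp]
    have hTr : T ^ (α-1) = ENNReal.ofReal (Real.exp ((α-1)*ε) / δ) := by
      rw [hTdef, ENNReal.ofReal_rpow_of_pos ht]
      congr 1
      rw [hT, Real.rpow_def_of_pos (Real.exp_pos _), Real.log_exp]
      have : (ε + Real.log (1/δ) / (α-1)) * (α-1) = (α-1)*ε + Real.log (1/δ) := by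
        field_simp
      rw [this, Real.exp_add, Real.exp_log (one_div_pos.mpr hδ.1)]
      ring
    calc ∫⁻ x in S, f x ∂Q ≤ ∫⁻ x in S, f x ^ α / T ^ (α-1) ∂Q :=
          setLIntegral_mono' hS step
      _ = (∫⁻ x in S, f x ^ α ∂Q) / T ^ (α-1) := by
          simp_rw [div_eq_mul_inv]
          rw [lintegral_mul_const _ (hmf.pow_const α)]
      _ ≤ (∫⁻ x, f x ^ α ∂Q) / T ^ (α-1) :=
          ENNReal.div_le_div_right (setLIntegral_le_lintegral _ _) _
      _ ≤ ENNReal.ofReal (Real.exp ((α-1)*ε)) / T ^ (α-1) :=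
          ENNReal.div_le_div_right hIle _
      _ = ENNReal.ofReal δ := by
          rw [hTr, ← ENNReal.ofReal_div_of_pos (div_pos (Real.exp_pos _) hδ.1)]
          congr 1
          field_simp
  calc P O = ∫⁻ x in O, f x ∂Q := hPO
    _ ≤ ∫⁻ x in O ∩ Sᶜ, f x ∂Q + ∫⁻ x in S, f x ∂Q := hsplit
    _ ≤ T * Q O + ENNReal.ofReal δ := add_le_add h1 h2
end

section
/- Let α > 1, d ∈ ℕ, and for each coordinate j ∈ {1,…,d} let μ_j, μ'_j ∈ ℝ and s_j, s'_j > 0 satisfy α s'_j + (1−α) s_j > 0. Then the Rényi divergence of order α between the product measures ⊗_{j=1}^d N(μ_j, s_j) and ⊗_{j=1}^d N(μ'_j, s'_j) on ℝ^d (i.e. Gaussians with diagonal covariances diag(s_1,…,s_d) and diag(s'_1,…,s'_d)) equals Σ_{j=1}^d [ α (μ_j − μ'_j)² / (2(α s'_j + (1−α) s_j)) − (1/(2(α−1))) log( (α s'_j + (1−α) s_j) / ( s_j^{1−α} (s'_j)^{α} ) ) ]. -/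
open MeasureTheory Real

/-!
Each `N(μ, v)` has density `p / q` with respect to `N(μ', w)`, so the product measure has the
product density with respect to the product measure, and `∫ (dP/dQ)^α dQ` factorises into the
one-dimensional integrals `∫ p^α q^(1-α) dx`. With `D = α w + (1-α) v > 0`, completing the square
in `α log p + (1-α) log q` makes each of them a Gaussian integral, equal to
`√(v^(1-α) w^α / D) · exp (α (α-1) (μ-μ')² / (2D))`; the logarithm of the product is the sum
of the logarithms of these factors.
-/

open scoped NNReal ENNReal
open ProbabilityTheory

theorem Set.indicator_univ_pi_prod_apply {ι R : Type*} [Fintype ι] [CommMonoidWithZero R]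
    {Ω : ι → Type*} (s : (i : ι) → Set (Ω i)) (f : (i : ι) → Ω i → R) (x : (i : ι) → Ω i) :
    (Set.univ.pi s).indicator (fun x => ∏ i, f i (x i)) x = ∏ i, (s i).indicator (f i) (x i) := by
  by_cases hx : x ∈ Set.univ.pi s
  · rw [Set.indicator_of_mem hx]
    exact Finset.prod_congr rfl fun i _ => (Set.indicator_of_mem (hx i (Set.mem_univ i)) _).symm
  · obtain ⟨i, hi⟩ : ∃ i, x i ∉ s i := by simpa using hx
    rw [Set.indicator_of_notMem hx,
      Finset.prod_eq_zero (Finset.mem_univ i) (Set.indicator_of_notMem hi _)]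

section Pi

variable {ι : Type*} [Fintype ι] {Ω : ι → Type*} [∀ i, MeasurableSpace (Ω i)]
  {Q : (i : ι) → Measure (Ω i)} [∀ i, IsProbabilityMeasure (Q i)]

theorem lintegral_pi_prod_eq_prod {f : (i : ι) → Ω i → ℝ≥0∞} (hf : ∀ i, Measurable (f i)) :
    ∫⁻ x, ∏ i, f i (x i) ∂Measure.pi Q = ∏ i, ∫⁻ y, f i y ∂Q i := by
  refine (lintegral_prod_eq_prod_lintegral_of_indepFun Finset.univ
    (fun i (x : (i : ι) → Ω i) => f i (x i)) (iIndepFun_pi fun i => (hf i).aemeasurable)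
    fun i => (hf i).comp (measurable_pi_apply i)).trans ?_
  exact Finset.prod_congr rfl fun i _ => (measurePreserving_eval Q i).lintegral_comp (hf i)

theorem pi_eq_withDensity_prod {P : (i : ι) → Measure (Ω i)} [∀ i, SigmaFinite (P i)]
    {f : (i : ι) → Ω i → ℝ≥0∞} (hf : ∀ i, Measurable (f i))
    (hP : ∀ i, P i = (Q i).withDensity (f i)) :
    Measure.pi P = (Measure.pi Q).withDensity fun x => ∏ i, f i (x i) := by
  refine Measure.pi_eq fun s hs => ?_
  rw [withDensity_apply _ (MeasurableSet.univ_pi hs),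
    ← lintegral_indicator (MeasurableSet.univ_pi hs)]
  simp_rw [Set.indicator_univ_pi_prod_apply]
  rw [lintegral_pi_prod_eq_prod fun i => (hf i).indicator (hs i)]
  simp_rw [lintegral_indicator (hs _), hP, withDensity_apply _ (hs _)]

end Pi

theorem renyiDiv_withDensity {X : Type*} [MeasurableSpace X] {Q : Measure X} [SigmaFinite Q]
    {f : X → ℝ≥0∞} (hf : Measurable f) (a : ℝ) (h : ∫⁻ x, f x ^ a ∂Q ≠ ⊤) :
    renyiDiv a (Q.withDensity f) Q = (((a - 1)⁻¹ * log (∫⁻ x, f x ^ a ∂Q).toReal : ℝ) : EReal) := by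
  have hint : ∫⁻ x, (Q.withDensity f).rnDeriv Q x ^ a ∂Q = ∫⁻ x, f x ^ a ∂Q :=
    lintegral_congr_ae ((Measure.rnDeriv_withDensity Q hf).mono fun x hx => by simp only [hx])
  rw [renyiDiv, if_pos ⟨withDensity_absolutelyContinuous Q f, hint ▸ h⟩, hint]

theorem gaussianReal_eq_withDensity_div (μ μ' : ℝ) {v w : ℝ≥0} (hv : v ≠ 0) (hw : w ≠ 0) :
    gaussianReal μ v =
      (gaussianReal μ' w).withDensity fun x => gaussianPDF μ v x / gaussianPDF μ' w x := by
  rw [gaussianReal_of_var_ne_zero _ hw, gaussianReal_of_var_ne_zero _ hv,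
    ← withDensity_mul _ (g := fun x => gaussianPDF μ v x / gaussianPDF μ' w x)
      (measurable_gaussianPDF _ _) ((measurable_gaussianPDF μ v).div (measurable_gaussianPDF μ' w))]
  congr 1 with x
  exact (ENNReal.mul_div_cancel (gaussianPDF_pos μ' hw x).ne' ENNReal.ofReal_ne_top).symm

theorem mix_gaussianExponents_eq_completeSquare (α μ μ' x : ℝ) {v w : ℝ} (hv : v ≠ 0)
    (hw : w ≠ 0) (hD : α * w + (1 - α) * v ≠ 0) :
    α * (-(x - μ) ^ 2 / (2 * v)) + (1 - α) * (-(x - μ') ^ 2 / (2 * w)) =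
      α * (α - 1) * (μ - μ') ^ 2 / (2 * (α * w + (1 - α) * v)) -
        (α * w + (1 - α) * v) / (2 * v * w) *
          (x - (α * w * μ + (1 - α) * v * μ') / (α * w + (1 - α) * v)) ^ 2 := by
  generalize hDdef : α * w + (1 - α) * v = D at hD ⊢
  field_simp
  rw [← hDdef]
  ring

theorem gaussianPDFReal_rpow_mul_rpow (α μ μ' x : ℝ) {v w : ℝ≥0} (hv : v ≠ 0) (hw : w ≠ 0)
    (hD : α * w + (1 - α) * v ≠ 0) :
    gaussianPDFReal μ v x ^ α * gaussianPDFReal μ' w x ^ (1 - α) =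
      (√(2 * π * v))⁻¹ ^ α * (√(2 * π * w))⁻¹ ^ (1 - α) *
        exp (α * (α - 1) * (μ - μ') ^ 2 / (2 * (α * w + (1 - α) * v))) *
        exp (-((α * w + (1 - α) * v) / (2 * v * w)) *
          (x - (α * w * μ + (1 - α) * v * μ') / (α * w + (1 - α) * v)) ^ 2) := by
  have exp_rpow (t a : ℝ) : exp t ^ a = exp (a * t) := by rw [← exp_mul, mul_comm]
  rw [gaussianPDFReal, gaussianPDFReal, mul_rpow (by positivity) (exp_pos _).le,
    mul_rpow (by positivity) (exp_pos _).le, exp_rpow, exp_rpow, mul_mul_mul_comm, ← exp_add,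
    mix_gaussianExponents_eq_completeSquare α μ μ' x (NNReal.coe_ne_zero.2 hv)
      (NNReal.coe_ne_zero.2 hw) hD, exp_sub, neg_mul, exp_neg, div_eq_mul_inv]
  ring

theorem inv_sqrt_two_pi_rpow_mul_rpow_mul_sqrt (α : ℝ) {v w D : ℝ} (hv : 0 < v) (hw : 0 < w)
    (hD : 0 < D) :
    (√(2 * π * v))⁻¹ ^ α * (√(2 * π * w))⁻¹ ^ (1 - α) * √(π / (D / (2 * v * w))) =
      √(v ^ (1 - α) * w ^ α / D) := by
  rw [show π / (D / (2 * v * w)) = 2 * π * v * w / D by field_simp]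
  refine log_injOn_pos (by simp; positivity) (by simp; positivity) ?_
  simp (disch := positivity) only [log_mul, log_div, log_rpow, log_inv, log_sqrt]
  ring

theorem integrable_gaussianPDFReal_rpow_mul_rpow (α μ μ' : ℝ) {v w : ℝ≥0} (hv : v ≠ 0)
    (hw : w ≠ 0) (hD : 0 < α * w + (1 - α) * v) :
    Integrable fun x => gaussianPDFReal μ v x ^ α * gaussianPDFReal μ' w x ^ (1 - α) := by
  have hb : 0 < (α * w + (1 - α) * v) / (2 * v * w) := by positivity
  simp_rw [gaussianPDFReal_rpow_mul_rpow α μ μ' _ hv hw hD.ne']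
  exact ((integrable_exp_neg_mul_sq hb).comp_sub_right _).const_mul _

theorem integral_gaussianPDFReal_rpow_mul_rpow (α μ μ' : ℝ) {v w : ℝ≥0} (hv : v ≠ 0)
    (hw : w ≠ 0) (hD : 0 < α * w + (1 - α) * v) :
    ∫ x, gaussianPDFReal μ v x ^ α * gaussianPDFReal μ' w x ^ (1 - α) =
      √((v : ℝ) ^ (1 - α) * (w : ℝ) ^ α / (α * w + (1 - α) * v)) *
        exp (α * (α - 1) * (μ - μ') ^ 2 / (2 * (α * w + (1 - α) * v))) := by
  simp_rw [gaussianPDFReal_rpow_mul_rpow α μ μ' _ hv hw hD.ne']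
  rw [integral_const_mul, integral_sub_right_eq_self
    (fun x => exp (-((α * w + (1 - α) * v) / (2 * v * w)) * x ^ 2)), integral_gaussian,
    mul_right_comm, inv_sqrt_two_pi_rpow_mul_rpow_mul_sqrt α
      (NNReal.coe_pos.2 (pos_iff_ne_zero.2 hv)) (NNReal.coe_pos.2 (pos_iff_ne_zero.2 hw)) hD]

theorem lintegral_gaussianPDF_div_rpow (α μ μ' : ℝ) {v w : ℝ≥0} (hv : v ≠ 0) (hw : w ≠ 0)
    (hD : 0 < α * w + (1 - α) * v) :
    ∫⁻ x, (gaussianPDF μ v x / gaussianPDF μ' w x) ^ α ∂gaussianReal μ' w =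
      ENNReal.ofReal (√((v : ℝ) ^ (1 - α) * (w : ℝ) ^ α / (α * w + (1 - α) * v)) *
        exp (α * (α - 1) * (μ - μ') ^ 2 / (2 * (α * w + (1 - α) * v)))) := by
  have hpt (x : ℝ) : gaussianPDF μ' w x * (gaussianPDF μ v x / gaussianPDF μ' w x) ^ α =
      ENNReal.ofReal (gaussianPDFReal μ v x ^ α * gaussianPDFReal μ' w x ^ (1 - α)) := by
    have hp := gaussianPDFReal_pos μ v x hv
    have hq := gaussianPDFReal_pos μ' w x hw
    rw [gaussianPDF, gaussianPDF, ← ENNReal.ofReal_div_of_pos hq,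
      ENNReal.ofReal_rpow_of_pos (div_pos hp hq), ← ENNReal.ofReal_mul hq.le,
      div_rpow hp.le hq.le, rpow_sub hq, rpow_one]
    congr 1
    field_simp
  have hmeas : Measurable fun x => (gaussianPDF μ v x / gaussianPDF μ' w x) ^ α :=
    ((measurable_gaussianPDF μ v).div (measurable_gaussianPDF μ' w)).pow_const α
  rw [gaussianReal_of_var_ne_zero _ hw,
    lintegral_withDensity_eq_lintegral_mul _ (measurable_gaussianPDF _ _) hmeas]
  simp_rw [Pi.mul_apply, hpt]
  rw [← ofReal_integral_eq_lintegral_ofReal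
      (integrable_gaussianPDFReal_rpow_mul_rpow α μ μ' hv hw hD)
      (ae_of_all _ fun x => mul_nonneg (rpow_nonneg (gaussianPDFReal_nonneg _ _ _) _)
        (rpow_nonneg (gaussianPDFReal_nonneg _ _ _) _)),
    integral_gaussianPDFReal_rpow_mul_rpow α μ μ' hv hw hD]

theorem inv_sub_one_mul_log_sqrt_mul_exp {α : ℝ} (hα : α ≠ 1) (μ μ' : ℝ) {v w : ℝ} (hv : 0 < v)
    (hw : 0 < w) (hD : 0 < α * w + (1 - α) * v) :
    (α - 1)⁻¹ * log (√(v ^ (1 - α) * w ^ α / (α * w + (1 - α) * v)) *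
        exp (α * (α - 1) * (μ - μ') ^ 2 / (2 * (α * w + (1 - α) * v)))) =
      α * (μ - μ') ^ 2 / (2 * (α * w + (1 - α) * v)) -
        1 / (2 * (α - 1)) * log ((α * w + (1 - α) * v) / (v ^ (1 - α) * w ^ α)) := by
  have hα' : α - 1 ≠ 0 := sub_ne_zero.2 hα
  rw [log_mul (by positivity) (exp_ne_zero _), log_exp, log_sqrt (by positivity),
    ← inv_div (α * w + (1 - α) * v), log_inv]
  field_simp
  ring

open ProbabilityTheory in
/-- Rényi divergence between two products of one-dimensional Gaussians with diagonal
covariances `diag(s)` and `diag(s')`. -/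
theorem renyiDiv_pi_gaussianReal {d : ℕ} (α : ℝ) (hα : 1 < α)
    (μ μ' : Fin d → ℝ) (s s' : Fin d → NNReal)
    (hs : ∀ j, 0 < s j) (hs' : ∀ j, 0 < s' j)
    (hmix : ∀ j, 0 < α * (s' j : ℝ) + (1 - α) * (s j : ℝ)) :
    renyiDiv α (Measure.pi fun j => gaussianReal (μ j) (s j))
        (Measure.pi fun j => gaussianReal (μ' j) (s' j)) =
      ((∑ j, (α * (μ j - μ' j) ^ 2 / (2 * (α * (s' j : ℝ) + (1 - α) * (s j : ℝ))) -
          (1 / (2 * (α - 1))) * Real.log ((α * (s' j : ℝ) + (1 - α) * (s j : ℝ)) /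
            ((s j : ℝ) ^ (1 - α) * (s' j : ℝ) ^ α)) ) : ℝ) : EReal) := by
  have hv (j : Fin d) : s j ≠ 0 := (hs j).ne'
  have hw (j : Fin d) : s' j ≠ 0 := (hs' j).ne'
  set r : Fin d → ℝ → ℝ≥0∞ := fun j x => gaussianPDF (μ j) (s j) x / gaussianPDF (μ' j) (s' j) x
  have hr (j : Fin d) : Measurable (r j) :=
    (measurable_gaussianPDF _ _).div (measurable_gaussianPDF _ _)
  set G : Fin d → ℝ := fun j =>
    √((s j : ℝ) ^ (1 - α) * (s' j : ℝ) ^ α / (α * s' j + (1 - α) * s j)) *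
      exp (α * (α - 1) * (μ j - μ' j) ^ 2 / (2 * (α * s' j + (1 - α) * s j)))
  have hG (j : Fin d) : 0 < G j := by
    have := hmix j; have := hs j; have := hs' j
    positivity
  have hint : ∫⁻ x, (∏ j, r j (x j)) ^ α ∂Measure.pi (fun j => gaussianReal (μ' j) (s' j)) =
      ENNReal.ofReal (∏ j, G j) := by
    simp_rw [← ENNReal.prod_rpow_of_nonneg (by linarith : (0 : ℝ) ≤ α)]
    rw [lintegral_pi_prod_eq_prod fun j => (hr j).pow_const α,
      ENNReal.ofReal_prod_of_nonneg fun j _ => (hG j).le]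
    exact Finset.prod_congr rfl fun j _ =>
      lintegral_gaussianPDF_div_rpow α _ _ (hv j) (hw j) (hmix j)
  rw [pi_eq_withDensity_prod hr fun j => gaussianReal_eq_withDensity_div _ _ (hv j) (hw j),
    renyiDiv_withDensity (by fun_prop) α (hint ▸ ENNReal.ofReal_ne_top), hint,
    ENNReal.toReal_ofReal (Finset.prod_nonneg fun j _ => (hG j).le),
    log_prod fun j _ => (hG j).ne', Finset.mul_sum]
  exact_mod_cast Finset.sum_congr rfl fun j _ =>
    inv_sub_one_mul_log_sqrt_mul_exp hα.ne' _ _ (hs j) (hs' j) (hmix j)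
end

section
/- Let α > 1, m, n ∈ ℕ with m ≥ 1, n ≥ 1, σ > 0, τ_B > 0, 0 < γ^min ≤ γ^max, 0 < τ_h^min ≤ τ_h^max, and suppose (m+1)(γ^min τ_h^min)² > (γ^max τ_h^max)². For each j ∈ {1,…,n}, let a_j² = Σ_{i=1}^m b_{ij}² and a'_j² = Σ_{i=1}^m b'_{ij}², where b'_{ij} = b_{ij} for all i except one common index I, every b_{ij}² and b'_{ij}² lies in the interval [(γ^min τ_h^min)²/n, (γ^max τ_h^max)²/n], and b'_{Ij}² ≥ b_{Ij}² for all j. Let f, f' ∈ ℝ^n satisfy ‖f − f'‖₂ ≤ (2/m) τ_B γ^max τ_h^max / √n. Then Σ_{j=1}^n [ (α m²/(2σ²)) (f_j − f'_j)² / (α a'_j² + (1−α) a_j²) − (1/(2(α−1))) log( (α a'_j² + (1−α) a_j²) / ( (a_j²)^{1−α} (a'_j²)^{α} ) ) ] ≤ (2α/(m σ²)) (γ^max τ_h^max τ_B)² / (γ^min τ_h^min)² + (n α/(2(α−1))) log[ m (γ^min τ_h^min)² / ( (m+1)(γ^min τ_h^min)² − (γ^max τ_h^max)² ) ]. -/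
open Finset Real

lemma pdfa_aux (α x y B : ℝ) (hα : 1 < α) (hx : 0 < x) (hxy : x ≤ y)
    (hB : 1 ≤ B) (hr : y / x ≤ B) :
    -(1 / (2 * (α - 1))) * Real.log ((α * y + (1 - α) * x) / (x ^ (1 - α) * y ^ α)) ≤
      (α / (2 * (α - 1))) * Real.log B := by
  have hα1 : (0:ℝ) < α - 1 := by linarith
  have hy : 0 < y := lt_of_lt_of_le hx hxy
  have hD : y ≤ α * y + (1 - α) * x := by nlinarith
  have hDpos : 0 < α * y + (1 - α) * x := lt_of_lt_of_le hy hD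
  have hxr : (0:ℝ) < x ^ (1 - α) := Real.rpow_pos_of_pos hx _
  have hyr : (0:ℝ) < y ^ α := Real.rpow_pos_of_pos hy _
  have hlog : Real.log ((α * y + (1 - α) * x) / (x ^ (1 - α) * y ^ α))
      = Real.log (α * y + (1 - α) * x) - (1 - α) * Real.log x - α * Real.log y := by
    rw [Real.log_div (ne_of_gt hDpos) (ne_of_gt (mul_pos hxr hyr)),
      Real.log_mul (ne_of_gt hxr) (ne_of_gt hyr), Real.log_rpow hx, Real.log_rpow hy]
    ring
  rw [hlog]
  have h1 : Real.log y ≤ Real.log (α * y + (1 - α) * x) := Real.log_le_log hy hD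
  have h3 : Real.log y - Real.log x ≤ Real.log B := by
    rw [← Real.log_div (ne_of_gt hy) (ne_of_gt hx)]
    exact Real.log_le_log (div_pos hy hx) hr
  have hBlog : 0 ≤ Real.log B := Real.log_nonneg hB
  have key : (1 - α) * Real.log x + α * Real.log y - Real.log (α * y + (1 - α) * x)
      ≤ α * Real.log B := by
    nlinarith [mul_le_mul_of_nonneg_left h3 hα1.le]
  calc -(1 / (2 * (α - 1))) * (Real.log (α * y + (1 - α) * x) - (1 - α) * Real.log x - α * Real.log y)
      = ((1 - α) * Real.log x + α * Real.log y - Real.log (α * y + (1 - α) * x)) / (2 * (α - 1)) := by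
        field_simp; ring
    _ ≤ (α * Real.log B) / (2 * (α - 1)) := by gcongr
    _ = (α / (2 * (α - 1))) * Real.log B := by ring

/-- Core estimate of the Photonic Differential Privacy theorem: the Rényi divergence of
order `α` between the Gaussian mechanisms `N(f(D), (σ²/m²) diag(a)²)` and
`N(f(D'), (σ²/m²) diag(a')²)` on neighboring datasets is bounded by `ε_PDFA`. -/
theorem pdfa_renyi_bound {m n : ℕ} (hm : 1 ≤ m) (hn : 1 ≤ n)
    (α σ τB γmin γmax τhmin τhmax : ℝ)
    (hα : 1 < α) (hσ : 0 < σ) (hτB : 0 < τB)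
    (hγ0 : 0 < γmin) (hγ : γmin ≤ γmax) (hτ0 : 0 < τhmin) (hτ : τhmin ≤ τhmax)
    (hsat : (γmax * τhmax) ^ 2 < ((m : ℝ) + 1) * (γmin * τhmin) ^ 2)
    (b b' : Fin m → Fin n → ℝ) (I : Fin m)
    (hagree : ∀ i, i ≠ I → ∀ j, b' i j = b i j)
    (hb : ∀ i j, (γmin * τhmin) ^ 2 / n ≤ (b i j) ^ 2 ∧
      (b i j) ^ 2 ≤ (γmax * τhmax) ^ 2 / n)
    (hb' : ∀ i j, (γmin * τhmin) ^ 2 / n ≤ (b' i j) ^ 2 ∧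
      (b' i j) ^ 2 ≤ (γmax * τhmax) ^ 2 / n)
    (hInc : ∀ j, (b I j) ^ 2 ≤ (b' I j) ^ 2)
    (f f' : Fin n → ℝ)
    (hf : Real.sqrt (∑ j, (f j - f' j) ^ 2) ≤
      (2 / (m : ℝ)) * τB * γmax * τhmax / Real.sqrt n) :
    ∑ j, ((α * (m : ℝ) ^ 2 / (2 * σ ^ 2)) * (f j - f' j) ^ 2 /
          (α * ∑ i, (b' i j) ^ 2 + (1 - α) * ∑ i, (b i j) ^ 2) -
        (1 / (2 * (α - 1))) * Real.log
          ((α * ∑ i, (b' i j) ^ 2 + (1 - α) * ∑ i, (b i j) ^ 2) /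
            ((∑ i, (b i j) ^ 2) ^ (1 - α) * (∑ i, (b' i j) ^ 2) ^ α))) ≤
      (2 * α / ((m : ℝ) * σ ^ 2)) * (γmax * τhmax * τB) ^ 2 / (γmin * τhmin) ^ 2 +
        ((n : ℝ) * α / (2 * (α - 1))) * Real.log
          ((m : ℝ) * (γmin * τhmin) ^ 2 /
            (((m : ℝ) + 1) * (γmin * τhmin) ^ 2 - (γmax * τhmax) ^ 2)) := by
  have hm' : (0:ℝ) < m := by exact_mod_cast hm
  have hn' : (0:ℝ) < n := by exact_mod_cast hn
  set c := (γmin * τhmin) ^ 2 with hc_def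
  set C := (γmax * τhmax) ^ 2 with hC_def
  have hc : 0 < c := by positivity
  have hcC : c ≤ C := by
    rw [hc_def, hC_def]
    apply pow_le_pow_left₀ (by positivity) (by nlinarith)
  have hCpos : 0 < C := lt_of_lt_of_le hc hcC
  have hden : 0 < ((m:ℝ) + 1) * c - C := by linarith
  have hα1 : (0:ℝ) < α - 1 := by linarith
  set x : Fin n → ℝ := fun j => ∑ i, (b i j) ^ 2 with hx_def
  set y : Fin n → ℝ := fun j => ∑ i, (b' i j) ^ 2 with hy_def
  have hsum_const : ∑ _i : Fin m, c / (n:ℝ) = (m:ℝ) * c / (n:ℝ) := by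
    rw [Finset.sum_const, Finset.card_univ, Fintype.card_fin, nsmul_eq_mul]
    ring
  have hx_lb : ∀ j, (m:ℝ) * c / n ≤ x j := by
    intro j
    rw [← hsum_const]
    exact Finset.sum_le_sum fun i _ => (hb i j).1
  have hy_lb : ∀ j, (m:ℝ) * c / n ≤ y j := by
    intro j
    rw [← hsum_const]
    exact Finset.sum_le_sum fun i _ => (hb' i j).1
  have hxpos : ∀ j, 0 < x j := fun j => lt_of_lt_of_le (by positivity) (hx_lb j)
  have hxy : ∀ j, x j ≤ y j := by
    intro j
    apply Finset.sum_le_sum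
    intro i _
    by_cases h : i = I
    · subst h; exact hInc j
    · rw [hagree i h]
  have hdiff : ∀ j, y j - x j ≤ (C - c) / n := by
    intro j
    have hs : ∑ i, ((b' i j) ^ 2 - (b i j) ^ 2) = (b' I j) ^ 2 - (b I j) ^ 2 := by
      apply Finset.sum_eq_single I
      · intro i _ h; rw [hagree i h]; ring
      · intro h; exact absurd (Finset.mem_univ I) h
    have : y j - x j = (b' I j) ^ 2 - (b I j) ^ 2 := by
      rw [hy_def, hx_def, ← Finset.sum_sub_distrib] at *
      exact hs
    rw [this]
    have h1 := (hb' I j).2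
    have h2 := (hb I j).1
    have h3 : (C - c) / (n:ℝ) = C / n - c / n := sub_div C c n
    linarith
  have hD_ge : ∀ j, x j ≤ α * y j + (1 - α) * x j := by
    intro j
    nlinarith [hxy j]
  have hDpos : ∀ j, 0 < α * y j + (1 - α) * x j :=
    fun j => lt_of_lt_of_le (hxpos j) (hD_ge j)
  -- ratio bound
  have hr : ∀ j, y j / x j ≤ (m:ℝ) * c / (((m:ℝ) + 1) * c - C) := by
    intro j
    rw [div_le_div_iff₀ (hxpos j) hden]
    have h1 : (m:ℝ) * c * (y j - x j) ≤ (m:ℝ) * c * ((C - c) / n) :=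
      mul_le_mul_of_nonneg_left (hdiff j) (by positivity)
    have h2 : ((m:ℝ) * c / n) * (C - c) ≤ y j * (C - c) :=
      mul_le_mul_of_nonneg_right (hy_lb j) (by linarith)
    have e : (m:ℝ) * c * ((C - c) / n) = (m:ℝ) * c / n * (C - c) := by ring
    linarith [h1, h2, e]
  have hB1 : (1:ℝ) ≤ (m:ℝ) * c / (((m:ℝ) + 1) * c - C) := by
    rw [le_div_iff₀ hden]
    linarith
  -- bound on the sum of squared differences
  have hf0 : 0 ≤ ∑ j, (f j - f' j) ^ 2 := Finset.sum_nonneg fun j _ => sq_nonneg _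
  have hsumf : ∑ j, (f j - f' j) ^ 2 ≤ 4 * τB ^ 2 * C / (m ^ 2 * n) := by
    have h1 : ∑ j, (f j - f' j) ^ 2 = Real.sqrt (∑ j, (f j - f' j) ^ 2) ^ 2 :=
      (Real.sq_sqrt hf0).symm
    rw [h1]
    calc Real.sqrt (∑ j, (f j - f' j) ^ 2) ^ 2
        ≤ ((2 / (m : ℝ)) * τB * γmax * τhmax / Real.sqrt n) ^ 2 :=
          pow_le_pow_left₀ (Real.sqrt_nonneg _) hf 2
      _ = 4 * τB ^ 2 * C / (m ^ 2 * n) := by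
          rw [div_pow, Real.sq_sqrt hn'.le, hC_def]
          field_simp
          ring
  -- first part
  have hS1 : ∑ j, (α * (m : ℝ) ^ 2 / (2 * σ ^ 2)) * (f j - f' j) ^ 2 /
      (α * y j + (1 - α) * x j) ≤
      (2 * α / ((m : ℝ) * σ ^ 2)) * (γmax * τhmax * τB) ^ 2 / c := by
    have hA : 0 ≤ α * (m : ℝ) ^ 2 / (2 * σ ^ 2) := by positivity
    calc ∑ j, (α * (m : ℝ) ^ 2 / (2 * σ ^ 2)) * (f j - f' j) ^ 2 / (α * y j + (1 - α) * x j)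
        ≤ ∑ j, (α * (m : ℝ) ^ 2 / (2 * σ ^ 2)) * (f j - f' j) ^ 2 / ((m:ℝ) * c / n) := by
          apply Finset.sum_le_sum
          intro j _
          have hnum : 0 ≤ (α * (m : ℝ) ^ 2 / (2 * σ ^ 2)) * (f j - f' j) ^ 2 := by positivity
          apply div_le_div_of_nonneg_left hnum (by positivity)
          exact le_trans (hx_lb j) (hD_ge j)
      _ = (α * (m : ℝ) ^ 2 / (2 * σ ^ 2)) * (∑ j, (f j - f' j) ^ 2) / ((m:ℝ) * c / n) := by
          rw [← Finset.sum_div, ← Finset.mul_sum]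
      _ ≤ (α * (m : ℝ) ^ 2 / (2 * σ ^ 2)) * (4 * τB ^ 2 * C / (m ^ 2 * n)) / ((m:ℝ) * c / n) := by
          gcongr
      _ = (2 * α / ((m : ℝ) * σ ^ 2)) * (γmax * τhmax * τB) ^ 2 / c := by
          rw [hC_def]
          field_simp
          ring
  -- second part
  have hS2 : ∑ j, -((1 / (2 * (α - 1))) * Real.log
      ((α * y j + (1 - α) * x j) / ((x j) ^ (1 - α) * (y j) ^ α))) ≤
      ((n : ℝ) * α / (2 * (α - 1))) * Real.log
        ((m : ℝ) * c / (((m : ℝ) + 1) * c - C)) := by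
    have hterm : ∀ j ∈ Finset.univ, -((1 / (2 * (α - 1))) * Real.log
        ((α * y j + (1 - α) * x j) / ((x j) ^ (1 - α) * (y j) ^ α))) ≤
        (α / (2 * (α - 1))) * Real.log ((m : ℝ) * c / (((m : ℝ) + 1) * c - C)) := by
      intro j _
      rw [← neg_mul]
      exact pdfa_aux α (x j) (y j) _ hα (hxpos j) (hxy j) hB1 (hr j)
    calc ∑ j, -((1 / (2 * (α - 1))) * Real.log
        ((α * y j + (1 - α) * x j) / ((x j) ^ (1 - α) * (y j) ^ α)))
        ≤ ∑ _j : Fin n, (α / (2 * (α - 1))) * Real.log ((m : ℝ) * c / (((m : ℝ) + 1) * c - C)) :=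
          Finset.sum_le_sum hterm
      _ = ((n : ℝ) * α / (2 * (α - 1))) * Real.log ((m : ℝ) * c / (((m : ℝ) + 1) * c - C)) := by
          rw [Finset.sum_const, Finset.card_univ, Fintype.card_fin, nsmul_eq_mul]
          ring
  have hsplit : ∑ j, ((α * (m : ℝ) ^ 2 / (2 * σ ^ 2)) * (f j - f' j) ^ 2 /
          (α * y j + (1 - α) * x j) -
        (1 / (2 * (α - 1))) * Real.log
          ((α * y j + (1 - α) * x j) / ((x j) ^ (1 - α) * (y j) ^ α)))
      = (∑ j, (α * (m : ℝ) ^ 2 / (2 * σ ^ 2)) * (f j - f' j) ^ 2 /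
          (α * y j + (1 - α) * x j)) +
        ∑ j, -((1 / (2 * (α - 1))) * Real.log
          ((α * y j + (1 - α) * x j) / ((x j) ^ (1 - α) * (y j) ^ α))) := by
    rw [← Finset.sum_add_distrib]
    apply Finset.sum_congr rfl
    intro j _
    ring
  calc ∑ j, ((α * (m : ℝ) ^ 2 / (2 * σ ^ 2)) * (f j - f' j) ^ 2 /
          (α * y j + (1 - α) * x j) -
        (1 / (2 * (α - 1))) * Real.log
          ((α * y j + (1 - α) * x j) / ((x j) ^ (1 - α) * (y j) ^ α)))
      = (∑ j, (α * (m : ℝ) ^ 2 / (2 * σ ^ 2)) * (f j - f' j) ^ 2 /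
          (α * y j + (1 - α) * x j)) +
        ∑ j, -((1 / (2 * (α - 1))) * Real.log
          ((α * y j + (1 - α) * x j) / ((x j) ^ (1 - α) * (y j) ^ α))) := hsplit
    _ ≤ (2 * α / ((m : ℝ) * σ ^ 2)) * (γmax * τhmax * τB) ^ 2 / c +
        ((n : ℝ) * α / (2 * (α - 1))) * Real.log
          ((m : ℝ) * c / (((m : ℝ) + 1) * c - C)) := add_le_add hS1 hS2
end
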